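/- arXiv:1506.05439 — 3 statements merged into one kernel-verified Lean document; each statement's English description precedes it below -/
import Mathlib

section
/- For the softmax function s on ℝ^K, the sum of the Euclidean norms of the coordinate gradients is bounded: Σ_{k=1}^K ‖∇s_k(o)‖_2 ≤ 2 for all o ∈ ℝ^K. -/
/-!
The `k`-th gradient of softmax at `o` is the row `j ↦ s_k (δ_kj - s_j)` of the Jacobian
`diag s - s sᵀ`, and only the fact that `s` is a probability vector matters. Bounding the
Euclidean norm of the row by its `ℓ¹` norm gives `s_k ∑_j |δ_kj - s_j| = 2 s_k (1 - s_k) ≤ 2 s_k`,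
and these sum to at most `2`.
-/

open scoped BigOperators

/-- The softmax function `s : ℝ^K → Δ^K`. -/
noncomputable def softmax {K : ℕ} (o : Fin K → ℝ) (k : Fin K) : ℝ :=
  Real.exp (o k) / ∑ j, Real.exp (o j)

open Finset

lemma Real.sqrt_sum_sq_le_sum_abs {ι : Type*} (t : Finset ι) (f : ι → ℝ) :
    √(∑ i ∈ t, f i ^ 2) ≤ ∑ i ∈ t, |f i| := by
  rw [Real.sqrt_le_left (sum_nonneg fun i _ => abs_nonneg _)]
  simpa only [sq_abs] using sum_sq_le_sq_sum_of_nonneg (s := t) fun i _ => abs_nonneg (f i)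

section ProbabilityVector

variable {ι : Type*} [Fintype ι] [DecidableEq ι] {p : ι → ℝ}

lemma sum_abs_ite_sub_eq (hp : ∀ i, 0 ≤ p i) (hsum : ∑ i, p i = 1) (k : ι) :
    ∑ j, |(if k = j then (1 : ℝ) else 0) - p j| = 2 * (1 - p k) := by
  have hpk : p k ≤ 1 := hsum ▸ single_le_sum (fun i _ => hp i) (mem_univ k)
  have hrest : ∑ j ∈ univ.erase k, p j = 1 - p k := by
    rw [← hsum, ← add_sum_erase _ _ (mem_univ k)]; ring
  have hoff : ∀ j ∈ univ.erase k, |(if k = j then (1 : ℝ) else 0) - p j| = p j := fun j hj => by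
    rw [if_neg (ne_of_mem_erase hj).symm, zero_sub, abs_neg, abs_of_nonneg (hp j)]
  rw [← add_sum_erase _ _ (mem_univ k), if_pos rfl, abs_of_nonneg (sub_nonneg.2 hpk),
    sum_congr rfl hoff, hrest]
  ring

lemma sqrt_sum_sq_jacobian_row_le (hp : ∀ i, 0 ≤ p i) (hsum : ∑ i, p i = 1) (k : ι) :
    √(∑ j, ((if k = j then (1 : ℝ) else 0) * p k - p k * p j) ^ 2) ≤ 2 * p k * (1 - p k) :=
  calc √(∑ j, ((if k = j then (1 : ℝ) else 0) * p k - p k * p j) ^ 2)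
      ≤ ∑ j, |(if k = j then (1 : ℝ) else 0) * p k - p k * p j| :=
        Real.sqrt_sum_sq_le_sum_abs _ _
    _ = p k * ∑ j, |(if k = j then (1 : ℝ) else 0) - p j| := by
        rw [mul_sum]
        refine sum_congr rfl fun j _ => ?_
        rw [← abs_of_nonneg (hp k), ← abs_mul, abs_of_nonneg (hp k), mul_sub, mul_comm]
    _ = 2 * p k * (1 - p k) := by rw [sum_abs_ite_sub_eq hp hsum]; ring

theorem sum_sqrt_sum_sq_jacobian_rows_le_two (hp : ∀ i, 0 ≤ p i) (hsum : ∑ i, p i = 1) :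
    ∑ k, √(∑ j, ((if k = j then (1 : ℝ) else 0) * p k - p k * p j) ^ 2) ≤ 2 :=
  calc ∑ k, √(∑ j, ((if k = j then (1 : ℝ) else 0) * p k - p k * p j) ^ 2)
      ≤ ∑ k, 2 * p k * (1 - p k) := sum_le_sum fun k _ => sqrt_sum_sq_jacobian_row_le hp hsum k
    _ ≤ ∑ k, 2 * p k := sum_le_sum fun k _ => by nlinarith [hp k]
    _ = 2 := by rw [← mul_sum, hsum, mul_one]

end ProbabilityVector

lemma softmax_nonneg {K : ℕ} (o : Fin K → ℝ) (k : Fin K) : 0 ≤ softmax o k :=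
  div_nonneg (Real.exp_pos _).le (sum_nonneg fun _ _ => (Real.exp_pos _).le)

lemma sum_softmax {K : ℕ} (hK : 0 < K) (o : Fin K → ℝ) : ∑ k, softmax o k = 1 := by
  simp only [softmax, ← sum_div]
  exact div_self (sum_pos (fun j _ => Real.exp_pos (o j)) ⟨⟨0, hK⟩, mem_univ _⟩).ne'

/-- The sum over coordinates of the Euclidean norms of the softmax
coordinate gradients is at most 2. -/
theorem softmax_sum_grad_norms_le_two {K : ℕ} (hK : 0 < K) (o : Fin K → ℝ) :
    ∑ k : Fin K, Real.sqrt (∑ j, ((if k = j then (1 : ℝ) else 0) * softmax o k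
        - softmax o k * softmax o j) ^ 2) ≤ 2 :=
  sum_sqrt_sum_sq_jacobian_rows_le_two (softmax_nonneg o) (sum_softmax hK o)
end

section
/- If T* = diag(u) K diag(v) minimizes the relaxed transport objective (so that u = (a ⊘ T*1)^{γ_a λ} and v = (b ⊘ (T*)ᵀ1)^{γ_b λ}), then u and v satisfy the fixed-point equations u = a^{γ_a λ/(γ_a λ + 1)} ⊙ (K v)^{−γ_a λ/(γ_a λ + 1)} and v = b^{γ_b λ/(γ_b λ + 1)} ⊙ (Kᵀ u)^{−γ_b λ/(γ_b λ + 1)}. -/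
/-- Taking logarithms turns `x = (A / (x * S)) ^ c` into the linear equation
`(c + 1) log x = c log A - c log S`. -/
lemma Real.eq_rpow_mul_rpow_of_eq_div_mul_rpow {x A S c : ℝ} (hx : 0 < x) (hA : 0 < A)
    (hS : 0 < S) (hc : c + 1 ≠ 0) (h : x = (A / (x * S)) ^ c) :
    x = A ^ (c / (c + 1)) * S ^ (-c / (c + 1)) := by
  have hlog : (c + 1) * Real.log x = c * Real.log A - c * Real.log S := by
    have := congrArg Real.log h
    rw [Real.log_rpow (by positivity), Real.log_div hA.ne' (by positivity),
      Real.log_mul hx.ne' hS.ne'] at this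
    linarith
  rw [← Real.exp_log hx, Real.rpow_def_of_pos hA, Real.rpow_def_of_pos hS, ← Real.exp_add]
  congr 1
  field_simp
  linarith

/-- If `T* = diag(u) K diag(v)` with `u = (a ⊘ T*1)^{γₐλ}` and
`v = (b ⊘ (T*)ᵀ1)^{γ_bλ}`, then `u` and `v` satisfy the Sinkhorn-like fixed-point
equations `u = a^{γₐλ/(γₐλ+1)} ⊙ (Kv)^{−γₐλ/(γₐλ+1)}` and
`v = b^{γ_bλ/(γ_bλ+1)} ⊙ (Kᵀu)^{−γ_bλ/(γ_bλ+1)}`. -/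
theorem relaxed_sinkhorn_fixed_point {K : ℕ}
    (Kmat : Matrix (Fin K) (Fin K) ℝ) (a b u v : Fin K → ℝ)
    (lam γa γb : ℝ) (hlam : 0 < lam) (hγa : 0 < γa) (hγb : 0 < γb)
    (ha : ∀ i, 0 < a i) (hb : ∀ j, 0 < b j)
    (hu : ∀ i, 0 < u i) (hv : ∀ j, 0 < v j)
    (hKmat : ∀ i j, 0 < Kmat i j)
    (hufix : ∀ i, u i = (a i / (u i * ∑ j, Kmat i j * v j)) ^ (γa * lam))
    (hvfix : ∀ j, v j = (b j / (v j * ∑ i, Kmat i j * u i)) ^ (γb * lam)) :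
    (∀ i, u i = a i ^ (γa * lam / (γa * lam + 1))
        * (∑ j, Kmat i j * v j) ^ (-(γa * lam) / (γa * lam + 1))) ∧
    (∀ j, v j = b j ^ (γb * lam / (γb * lam + 1))
        * (∑ i, Kmat i j * u i) ^ (-(γb * lam) / (γb * lam + 1))) := by
  refine ⟨fun i => ?_, fun j => ?_⟩
  · have hKv : 0 < ∑ j, Kmat i j * v j :=
      Finset.sum_pos (fun j _ => mul_pos (hKmat i j) (hv j)) ⟨i, Finset.mem_univ i⟩
    exact Real.eq_rpow_mul_rpow_of_eq_div_mul_rpow (hu i) (ha i) hKv (by positivity) (hufix i)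
  · have hKu : 0 < ∑ i, Kmat i j * u i :=
      Finset.sum_pos (fun i _ => mul_pos (hKmat i j) (hu i)) ⟨j, Finset.mem_univ j⟩
    exact Real.eq_rpow_mul_rpow_of_eq_div_mul_rpow (hv j) (hb j) hKu (by positivity) (hvfix j)
end

section
/- Let (K,d) be a finite metric space of size K, and suppose a classifier h maps inputs to probability vectors on K with expected Wasserstein-1 risk E[W_1(h(x), e_{κ(x)})] ≤ ε, where the label is one-hot. Then the expected semantic distance of the argmax prediction satisfies E[d(κ̂(x), κ(x))] ≤ K ε, where κ̂(x) = argmax_κ h(κ|x). -/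
/-! The argmax weight of a probability vector on `K` points is at least `1 / K`, so pointwise
`d(κ̂, κ) ≤ K · d(κ̂, κ) h(κ̂) ≤ K · W₁(h, e_κ)`; integrating gives the bound. -/

open MeasureTheory

theorem one_le_card_mul_of_forall_le {ι : Type*} [Fintype ι] {w : ι → ℝ}
    (hw : ∑ i, w i = 1) {j : ι} (hj : ∀ i, w i ≤ w j) :
    1 ≤ Fintype.card ι * w j := by
  simpa [hw, nsmul_eq_mul] using Finset.sum_le_card_nsmul Finset.univ w (w j) fun i _ => hj i

theorem le_card_mul_sum_mul_of_forall_le {ι : Type*} [Fintype ι] {w c : ι → ℝ}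
    (hw₀ : ∀ i, 0 ≤ w i) (hw : ∑ i, w i = 1) (hc : ∀ i, 0 ≤ c i)
    {j : ι} (hj : ∀ i, w i ≤ w j) :
    c j ≤ Fintype.card ι * ∑ i, c i * w i :=
  calc c j = c j * 1 := (mul_one _).symm
    _ ≤ c j * (Fintype.card ι * w j) :=
      mul_le_mul_of_nonneg_left (one_le_card_mul_of_forall_le hw hj) (hc j)
    _ = Fintype.card ι * (c j * w j) := by ring
    _ ≤ Fintype.card ι * ∑ i, c i * w i := by
      gcongr
      exact Finset.single_le_sum (fun i _ => mul_nonneg (hc i) (hw₀ i)) (Finset.mem_univ j)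

theorem expected_semantic_distance_le_general {X : Type*} [MeasurableSpace X]
    {α : Type*} [Fintype α] [MetricSpace α] [MeasurableSpace α]
    {K : ℕ} (hcard : Fintype.card α = K)
    (P : Measure (X × α))
    (h : X → α → ℝ)
    (hprob : ∀ x, (∀ κ', 0 ≤ h x κ') ∧ ∑ κ', h x κ' = 1)
    (κhat : X → α) (hargmax : ∀ x κ', h x κ' ≤ h x (κhat x))
    (ε : ℝ)
    (hWint : Integrable (fun p : X × α => ∑ κ' : α, dist κ' p.2 * h p.1 κ') P)
    (hrisk : ∫ p : X × α, (∑ κ' : α, dist κ' p.2 * h p.1 κ') ∂P ≤ ε) :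
    ∫ p : X × α, dist (κhat p.1) p.2 ∂P ≤ (K : ℝ) * ε := by
  subst hcard
  have hpointwise : ∀ p : X × α,
      dist (κhat p.1) p.2 ≤ Fintype.card α * ∑ κ' : α, dist κ' p.2 * h p.1 κ' := fun p =>
    le_card_mul_sum_mul_of_forall_le (c := (dist · p.2)) (hprob p.1).1 (hprob p.1).2
      (fun _ => dist_nonneg) (hargmax p.1)
  calc ∫ p : X × α, dist (κhat p.1) p.2 ∂P
      ≤ ∫ p : X × α, Fintype.card α * ∑ κ' : α, dist κ' p.2 * h p.1 κ' ∂P :=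
        integral_mono_of_nonneg (ae_of_all _ fun _ => dist_nonneg) (hWint.const_mul _)
          (ae_of_all _ hpointwise)
    _ = Fintype.card α * ∫ p : X × α, ∑ κ' : α, dist κ' p.2 * h p.1 κ' ∂P :=
        integral_const_mul _ _
    _ ≤ Fintype.card α * ε := by gcongr

/-- If a classifier `h` into probability vectors on a finite metric
space of size `K` has expected Wasserstein-1 risk at most `ε` against one-hot labels,
then the expected semantic distance of its argmax prediction is at most `K ε`. -/
theorem expected_semantic_distance_le {X : Type*} [MeasurableSpace X]
    {α : Type*} [Fintype α] [MetricSpace α] [MeasurableSpace α]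
    {K : ℕ} (hcard : Fintype.card α = K) (hK : 0 < K)
    (P : Measure (X × α)) [IsProbabilityMeasure P]
    (h : X → α → ℝ)
    (hprob : ∀ x, (∀ κ', 0 ≤ h x κ') ∧ ∑ κ', h x κ' = 1)
    (κhat : X → α) (hargmax : ∀ x κ', h x κ' ≤ h x (κhat x))
    (ε : ℝ)
    (hWint : Integrable (fun p : X × α => ∑ κ' : α, dist κ' p.2 * h p.1 κ') P)
    (hdint : Integrable (fun p : X × α => dist (κhat p.1) p.2) P)
    (hrisk : ∫ p : X × α, (∑ κ' : α, dist κ' p.2 * h p.1 κ') ∂P ≤ ε) :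
    ∫ p : X × α, dist (κhat p.1) p.2 ∂P ≤ (K : ℝ) * ε :=
  expected_semantic_distance_le_general hcard P h hprob κhat hargmax ε hWint hrisk
end
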